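/- Let d_1, …, d_r be positive integers. Then the product ∏_{i=1}^r lcm(1,…,d_i) is equal to the least common multiple of all products i_1 · i_2 · ⋯ · i_r, where each i_j ranges over the integers with 1 ≤ i_j ≤ d_j. -/
import Mathlib

lemma finset_lcm_factorization (s : Finset ℕ) (hs : ∀ n ∈ s, n ≠ 0) (p : ℕ) :
    (s.lcm id).factorization p = s.sup (fun n => n.factorization p) := by
  induction s using Finset.induction with
  | empty => simp
  | @insert a s ha ih =>
    have hs' : ∀ n ∈ s, n ≠ 0 := fun n hn => hs n (Finset.mem_insert_of_mem hn)
    have hlcm : s.lcm id ≠ 0 := by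
      simp only [ne_eq, Finset.lcm_eq_zero_iff]
      rintro ⟨n, hn, rfl⟩
      exact hs' 0 hn rfl
    rw [Finset.lcm_insert, Finset.sup_insert, lcm_eq_nat_lcm, id,
      Nat.factorization_lcm (hs a (Finset.mem_insert_self a s)) hlcm,
      Finsupp.sup_apply, ih hs']

/-- `∏ᵢ lcm(1,…,dᵢ)` equals the lcm of all products `i₁⋯i_r` with `1 ≤ i_j ≤ d_j`. -/
theorem stmt_1 (r : ℕ) (d : Fin r → ℕ) (hd : ∀ i, 1 ≤ d i) :
    ∏ i, (Finset.Icc 1 (d i)).lcm id =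
      (Finset.univ.pi fun i => Finset.Icc 1 (d i)).lcm
        (fun f => ∏ i, f i (Finset.mem_univ i)) := by
  have hpos : ∀ i, ∀ n ∈ Finset.Icc 1 (d i), n ≠ 0 := by
    intro i n hn
    have := (Finset.mem_Icc.mp hn).1
    omega
  have hL0 : ∀ i, (Finset.Icc 1 (d i)).lcm id ≠ 0 := by
    intro i
    simp only [ne_eq, Finset.lcm_eq_zero_iff]
    rintro ⟨n, hn, rfl⟩
    exact hpos i 0 hn rfl
  have hN : ∏ i, (Finset.Icc 1 (d i)).lcm id ≠ 0 :=
    Finset.prod_ne_zero_iff.mpr fun i _ => hL0 i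
  have h1 : (Finset.univ.pi fun i => Finset.Icc 1 (d i)).lcm
      (fun f => ∏ i, f i (Finset.mem_univ i)) ∣ ∏ i, (Finset.Icc 1 (d i)).lcm id := by
    apply Finset.lcm_dvd
    intro f hf
    exact Finset.prod_dvd_prod_of_dvd _ _ fun i _ =>
      Finset.dvd_lcm (Finset.mem_pi.mp hf i (Finset.mem_univ i))
  have hM : (Finset.univ.pi fun i => Finset.Icc 1 (d i)).lcm
      (fun f => ∏ i, f i (Finset.mem_univ i)) ≠ 0 := fun h => hN (by simpa [h] using h1)
  refine Nat.dvd_antisymm ?_ h1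
  rw [← Nat.factorization_le_iff_dvd hN hM, Finsupp.le_def]
  intro p
  -- choose maximizers
  have hch : ∀ i, ∃ a ∈ Finset.Icc 1 (d i),
      (Finset.Icc 1 (d i)).sup (fun n => n.factorization p) = a.factorization p :=
    fun i => Finset.exists_mem_eq_sup _ ⟨1, Finset.mem_Icc.mpr ⟨le_refl 1, hd i⟩⟩ _
  choose a hamem hasup using hch
  have hfmem : (fun i _ => a i) ∈ Finset.univ.pi fun i => Finset.Icc 1 (d i) :=
    Finset.mem_pi.mpr fun i _ => hamem i
  have hdvd : (∏ i, a i) ∣ (Finset.univ.pi fun i => Finset.Icc 1 (d i)).lcm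
      (fun f => ∏ i, f i (Finset.mem_univ i)) :=
    Finset.dvd_lcm hfmem
  have ha0 : ∀ i ∈ Finset.univ, a i ≠ 0 := fun i _ => hpos i (a i) (hamem i)
  calc (∏ i, (Finset.Icc 1 (d i)).lcm id).factorization p
      = ∑ i, ((Finset.Icc 1 (d i)).lcm id).factorization p := by
        rw [Nat.factorization_prod fun i _ => hL0 i]
        simp [Finsupp.finset_sum_apply]
    _ = ∑ i, (a i).factorization p := by
        refine Finset.sum_congr rfl fun i _ => ?_
        rw [finset_lcm_factorization _ (hpos i) p, hasup i]
    _ = (∏ i, a i).factorization p := by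
        rw [Nat.factorization_prod ha0]
        simp [Finsupp.finset_sum_apply]
    _ ≤ _ := by
        have := (Nat.factorization_le_iff_dvd (Finset.prod_ne_zero_iff.mpr ha0) hM).mpr hdvd
        exact this p
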